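/- Let n ≥ 2 be an integer, a > 0 a real number, and C ∈ ℝ. There is no continuous function m : [1,∞) → ℝ satisfying −m(t) − (1/(n-1)) ∫₁ᵗ m(s)² ds ≥ a·t + C for all t ≥ 1. -/

import Mathlib

/-!
For large `t` the right-hand side exceeds `1`, so `u := 1 + F/(n-1)` with `F t = ∫₁ᵗ m²` satisfies
`u ≤ -m` and hence the Riccati inequality `u' = m²/(n-1) ≥ u²/(n-1)`. A positive solution of
`u' ≥ k u²` blows up in finite time, because `1/u` decreases at rate at least `k`.
-/

open Set Filter

theorem hasDerivAt_integral_of_continuousOn_Ici {f : ℝ → ℝ} {a t : ℝ}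
    (hf : ContinuousOn f (Ici a)) (ht : a < t) :
    HasDerivAt (fun x => ∫ s in a..x, f s) (f t) t := by
  have hint : IntervalIntegrable f MeasureTheory.volume a t :=
    (hf.mono fun x hx => by rw [uIcc_of_le ht.le] at hx; exact hx.1).intervalIntegrable
  exact intervalIntegral.integral_hasDerivAt_right hint
    ((hf.mono Ioi_subset_Ici_self).stronglyMeasurableAtFilter isOpen_Ioi t ht)
    (hf.continuousAt (Ici_mem_nhds ht))

theorem antitoneOn_inv_add_mul_of_riccati {u u' : ℝ → ℝ} {k T : ℝ}
    (hpos : ∀ t ≥ T, 0 < u t) (hu : ∀ t ≥ T, HasDerivAt u (u' t) t)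
    (hriccati : ∀ t ≥ T, k * u t ^ 2 ≤ u' t) :
    AntitoneOn (fun t => (u t)⁻¹ + k * t) (Ici T) := by
  have hderiv : ∀ t ≥ T, HasDerivAt (fun t => (u t)⁻¹ + k * t) (-u' t / u t ^ 2 + k) t :=
    fun t ht => (((hu t ht).inv (hpos t ht).ne').add ((hasDerivAt_id' t).const_mul k)).congr_deriv
      (by ring)
  refine antitoneOn_of_hasDerivWithinAt_nonpos (convex_Ici T)
    (fun t ht => (hderiv t ht).continuousAt.continuousWithinAt)
    (fun t ht => (hderiv t (interior_subset ht)).hasDerivWithinAt) fun t ht => ?_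
  have hsq : 0 < u t ^ 2 := pow_pos (hpos t (interior_subset ht)) 2
  rw [neg_div, neg_add_nonpos_iff, le_div_iff₀ hsq]
  exact hriccati t (interior_subset ht)

theorem false_of_riccati_of_pos {u u' : ℝ → ℝ} {k T : ℝ} (hk : 0 < k)
    (hpos : ∀ t ≥ T, 0 < u t) (hu : ∀ t ≥ T, HasDerivAt u (u' t) t)
    (hriccati : ∀ t ≥ T, k * u t ^ 2 ≤ u' t) : False := by
  set t₁ := T + (u T)⁻¹ / k
  have hT : T ≤ t₁ := le_add_of_nonneg_right (by have := hpos T le_rfl; positivity)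
  have hanti := antitoneOn_inv_add_mul_of_riccati hpos hu hriccati
    self_mem_Ici (hT : t₁ ∈ Ici T) hT
  have hkt₁ : k * t₁ = k * T + (u T)⁻¹ := by simp only [t₁]; field_simp
  have := inv_pos.2 (hpos t₁ hT)
  simp only [hkt₁] at hanti
  linarith

/-- **No continuous solution of the linear-growth Riccati-type inequality.** For
`n ≥ 2`, `a > 0`, `C ∈ ℝ`, there is no continuous `m : [1,∞) → ℝ` with
`-m(t) - (1/(n-1)) ∫₁ᵗ m(s)² ds ≥ a·t + C` for all `t ≥ 1`. -/
theorem no_continuous_solution_riccati_linear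
    (n : ℕ) (hn : 2 ≤ n) (a : ℝ) (ha : 0 < a) (C : ℝ) :
    ¬ ∃ m : ℝ → ℝ, ContinuousOn m (Set.Ici 1) ∧
      ∀ t ≥ (1 : ℝ),
        a * t + C ≤ -m t - (1 / ((n : ℝ) - 1)) * ∫ s in (1:ℝ)..t, (m s) ^ 2 := by
  rintro ⟨m, hm, hineq⟩
  set k := 1 / ((n : ℝ) - 1)
  have hk : 0 < k := one_div_pos.2 (by have : (2 : ℝ) ≤ n := (by exact_mod_cast hn); linarith)
  have hlin : Tendsto (fun t => a * t + C) atTop atTop :=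
    tendsto_atTop_add_const_right _ C (tendsto_id.const_mul_atTop ha)
  obtain ⟨T, hT⟩ :=
    ((hlin.eventually_ge_atTop 1).and (eventually_gt_atTop 1)).exists_forall_of_atTop
  set u := fun t => 1 + k * ∫ s in (1:ℝ)..t, m s ^ 2
  have hpos : ∀ t ≥ T, 0 < u t := fun t ht => by
    have : 0 ≤ ∫ s in (1:ℝ)..t, m s ^ 2 :=
      intervalIntegral.integral_nonneg (hT t ht).2.le fun s _ => sq_nonneg (m s)
    positivity
  refine false_of_riccati_of_pos (u' := fun t => k * m t ^ 2) hk hpos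
    (fun t ht => ?_) fun t ht => ?_
  · exact ((hasDerivAt_integral_of_continuousOn_Ici (hm.pow 2) (hT t ht).2).const_mul k).const_add 1
  · have hum : u t ≤ -m t := by
      have := hineq t (hT t ht).2.le
      linarith [(hT t ht).1]
    have := hpos t ht
    exact mul_le_mul_of_nonneg_left (by nlinarith) hk.le
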